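/- arXiv:1412.2331 — 3 statements merged into one kernel-verified Lean document; each statement's English description precedes it below -/
import Mathlib

section
/- Let α and β be hyperbolic isometries of ℍ² whose axes A_α and A_β intersect at a point P. Let Q be the point on A_α at distance τ_α/2 from P in the positive direction of A_α, and let R be the point on A_β at distance τ_β/2 from P in the negative direction of A_β. Then the product αβ is hyperbolic, its axis is the geodesic through R and Q (oriented from R to Q), and d(Q,R) = τ_{αβ}/2. -/
/- Setup: the hyperbolic plane ℍ (upper half-plane model with its hyperbolic
metric), orientation-preserving isometries identified with elements of
SL(2,ℝ) acting by Möbius transformations (so that PSL(2,ℝ) = SL(2,ℝ)/{±1} is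
the isometry group), the ideal boundary ℝ ∪ {∞}, geodesics, axes,
translation lengths, quasi-geodesics, Fuchsian groups and the Goldman
bracket machinery. -/

noncomputable section
open Set UpperHalfPlane ENNReal Metric

/-- `SL(2,ℝ)`, acting on the upper half-plane `ℍ` by Möbius transformations;
orientation-preserving isometries of `ℍ` are exactly `PSL(2,ℝ) = SL(2,ℝ)/±1`. -/
abbrev SL2 := Matrix.SpecialLinearGroup (Fin 2) ℝ

/-- The ideal boundary `∂ℍ = ℝ ∪ {∞}` (`none` is the point `∞`). -/
abbrev Bd := Option ℝ

/-- The Möbius action of `SL(2,ℝ)` on the ideal boundary `ℝ ∪ {∞}`. -/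
def mobius (g : SL2) : Bd → Bd := fun x =>
  match x with
  | none => if g.1 1 0 = 0 then none else some (g.1 0 0 / g.1 1 0)
  | some x => if g.1 1 0 * x + g.1 1 1 = 0 then none
      else some ((g.1 0 0 * x + g.1 0 1) / (g.1 1 0 * x + g.1 1 1))

/-- `g` represents a nontrivial isometry of `ℍ` (i.e. `g ≠ ±1`: a
non-identity element of `PSL(2,ℝ)`). -/
def IsNontrivialIsom (g : SL2) : Prop := ∃ z : ℍ, g • z ≠ z

/-- Elliptic isometry: nontrivial, with a (unique) fixed point in `ℍ`. -/
def IsElliptic (g : SL2) : Prop := IsNontrivialIsom g ∧ ∃! z : ℍ, g • z = z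

/-- Parabolic isometry: nontrivial, no fixed point in `ℍ` and a unique fixed
point on the ideal boundary. -/
def IsParabolic (g : SL2) : Prop :=
  IsNontrivialIsom g ∧ (∀ z : ℍ, g • z ≠ z) ∧ ∃! x : Bd, mobius g x = x

/-- Hyperbolic isometry: nontrivial, no fixed point in `ℍ` and exactly two
fixed points on the ideal boundary. -/
def IsHyperbolicIsom (g : SL2) : Prop :=
  IsNontrivialIsom g ∧ (∀ z : ℍ, g • z ≠ z) ∧
    ∃ x y : Bd, x ≠ y ∧ {p : Bd | mobius g p = p} = {x, y}

/-- The translation length `τ_g = inf_{z ∈ ℍ} d(z, g z)`. -/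
def transLength (g : SL2) : ℝ := ⨅ z : ℍ, dist z (g • z)

/-- `c : ℝ → ℍ` is an (oriented, unit-speed) axis of `g` with translation
length `τ`: a geodesic line on which `g` acts by translation by `τ > 0` in
the positive direction. -/
def IsAxisOf (c : ℝ → ℍ) (g : SL2) (τ : ℝ) : Prop :=
  Isometry c ∧ 0 < τ ∧ ∀ t : ℝ, g • c t = c (t + τ)

/-- The axis of `g` as a subset of `ℍ` (empty if `g` is not hyperbolic). -/
def axisSet (g : SL2) : Set ℍ :=
  {z : ℍ | ∃ (c : ℝ → ℍ) (t : ℝ), IsAxisOf c g (transLength g) ∧ c t = z}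

/-- The tangent direction (as a complex number, via the conformal inclusion
`ℍ ⊂ ℂ`) of a path `c` in `ℍ` at time `t`. -/
def dir (c : ℝ → ℍ) (t : ℝ) : ℂ := deriv (fun s => (c s : ℂ)) t

/-- The signed angle from direction `u` to direction `v`, measured
conformally in `ℂ ⊃ ℍ`; its absolute value is the unoriented angle. -/
def vecAngle (u v : ℂ) : ℝ := Complex.arg (v / u)

/-- Hyperbolic length of the path `γ` over the interval `[s,t]`. -/
def pathLength (γ : ℝ → ℍ) (s t : ℝ) : ℝ≥0∞ := eVariationOn γ (Icc s t)

/-- `γ : ℝ → ℍ` is a `K`-quasi-geodesic: the length of each subpath is at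
most `K` times the distance between its endpoints. -/
def IsQuasiGeodesic (K : ℝ) (γ : ℝ → ℍ) : Prop :=
  ∀ s t : ℝ, s ≤ t → pathLength γ s t ≤ ENNReal.ofReal (K * dist (γ s) (γ t))

/-- `γ` is piecewise geodesic: there are break points `t n` (exhausting `ℝ`)
such that on each `[t n, t (n+1)]`, `γ` traverses a geodesic segment at
constant speed. -/
def IsPiecewiseGeodesic (γ : ℝ → ℍ) : Prop :=
  Continuous γ ∧ ∃ t : ℤ → ℝ, StrictMono t ∧
    (∀ x : ℝ, ∃ n : ℤ, x ∈ Icc (t n) (t (n + 1))) ∧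
    ∀ n : ℤ, ∃ (c : ℝ → ℍ) (u v : ℝ), Isometry c ∧
      ∀ s ∈ Icc (t n) (t (n + 1)), γ s = c (u + v * s)

/-- `γ` restricted to `[a,b]` is a geodesic segment traversed at constant
speed. -/
def GeodSeg (γ : ℝ → ℍ) (a b : ℝ) : Prop :=
  ∃ (c : ℝ → ℍ) (u v : ℝ), Isometry c ∧ ∀ s ∈ Icc a b, γ s = c (u + v * s)

/-- The subgroup `G ≤ SL(2,ℝ)` acts properly discontinuously on `ℍ`
(equivalently, the corresponding subgroup of `PSL(2,ℝ)` is discrete). -/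
def ProperlyDiscontinuous (G : Subgroup SL2) : Prop :=
  ∀ K : Set ℍ, IsCompact K → {g : G | ((((g : SL2)) • ·) '' K ∩ K).Nonempty}.Finite

/-- `G` acts freely on `ℍ`: no element acting nontrivially has a fixed point. -/
def ActsFreely (G : Subgroup SL2) : Prop :=
  ∀ g : G, IsNontrivialIsom (g : SL2) → ∀ z : ℍ, (g : SL2) • z ≠ z

/-- `G` is torsion-free. -/
def TorsionFree (G : Subgroup SL2) : Prop :=
  ∀ g : G, ∀ n : ℕ, n ≠ 0 → g ^ n = 1 → g = 1

/-- The action of `G` is cocompact (closed quotient surface). -/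
def Cocompact (G : Subgroup SL2) : Prop :=
  ∃ K : Set ℍ, IsCompact K ∧ ∀ z : ℍ, ∃ g : G, (g : SL2) • z ∈ K

/-- `α ∈ G` represents a *simple* closed geodesic: it is hyperbolic and any
two `G`-translates of its axis are equal or disjoint. -/
def IsSimple (G : Subgroup SL2) (α : G) : Prop :=
  IsHyperbolicIsom (α : SL2) ∧
  ∀ g : G, (((g : SL2) • ·) '' axisSet (α : SL2) = axisSet (α : SL2)) ∨
    Disjoint (((g : SL2) • ·) '' axisSet (α : SL2)) (axisSet (α : SL2))

/-- The fundamental segment `I(α,β) ⊆ A_α`: the half-open segment of length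
`τ_α` starting at the intersection point of `A_α` and `A_β`, in the positive
direction of `A_α`. -/
def fundSeg (α β : SL2) : Set ℍ :=
  {x : ℍ | ∃ (c : ℝ → ℍ) (t₀ t : ℝ), IsAxisOf c α (transLength α) ∧
      c t₀ ∈ axisSet β ∧ t ∈ Ico t₀ (t₀ + transLength α) ∧ c t = x}

/-- The translate `g A_β` crosses the fundamental segment `I(α,β)` of `A_α`
(transversally: it is a geodesic distinct from `A_α` meeting `I(α,β)`). -/
def Meets (α β g : SL2) : Prop :=
  (g • ·) '' axisSet β ≠ axisSet α ∧ (((g • ·) '' axisSet β) ∩ fundSeg α β).Nonempty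

/-- The sign `ε = ±1` of the transversal intersection between the oriented
axes of `α` and `β'`, computed conformally from the tangent directions at
the intersection point. -/
def SignCond (α β' : SL2) (ε : ℤ) : Prop :=
  ∀ (c c' : ℝ → ℍ) (t s : ℝ), IsAxisOf c α (transLength α) →
    IsAxisOf c' β' (transLength β') → c t = c' s →
    (0 < ((dir c' s) / (dir c t)).im ∧ ε = 1) ∨
    (((dir c' s) / (dir c t)).im < 0 ∧ ε = -1)

/-- The piecewise-geodesic lift `γ(α,β)` of the loop product `α∗β`: the
`(αβ)`-periodic path obtained by concatenating the geodesic segment from `P`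
to `αP` (on `[0,1/2]`) with the geodesic segment from `αP` to `αβP`
(on `[1/2,1]`), where `P = A_α ∩ A_β`. -/
def IsZigzag (α β : SL2) (γ : ℝ → ℍ) : Prop :=
  Continuous γ ∧ γ 0 ∈ axisSet α ∩ axisSet β ∧ γ (1/2) = α • γ 0 ∧
  (∀ t : ℝ, γ (t + 1) = (α * β) • γ t) ∧ GeodSeg γ 0 (1/2) ∧ GeodSeg γ (1/2) 1

/-- Hyperbolic convexity: `A` contains the geodesic segment between any two
of its points. -/
def HConvex (A : Set ℍ) : Prop :=
  ∀ x ∈ A, ∀ y ∈ A, ∀ c : ℝ → ℍ, Isometry c → c 0 = x → c (dist x y) = y →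
    ∀ t ∈ Icc (0 : ℝ) (dist x y), c t ∈ A

/-- The hyperbolically convex hull of a set in `ℍ`. -/
def hConvexHull (s : Set ℍ) : Set ℍ := ⋂₀ {A : Set ℍ | HConvex A ∧ s ⊆ A}

/-- `θ` is the (unoriented) angle at `P` between the geodesic segments from
`P` to `X` and from `P` to `Y`. -/
def AngleAt (P X Y : ℍ) (θ : ℝ) : Prop :=
  ∀ c₁ c₂ : ℝ → ℍ, Isometry c₁ → Isometry c₂ → c₁ 0 = P → c₂ 0 = P →
    c₁ (dist P X) = X → c₂ (dist P Y) = Y →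
    |vecAngle (dir c₁ 0) (dir c₂ 0)| = θ

/-- The quotient hyperbolic surface `F = ℍ/G`. -/
abbrev SurfaceOf (G : Subgroup SL2) := Quotient (MulAction.orbitRel G ℍ)

/-- `f` is a closed loop on the surface `F = ℍ/G` in the free homotopy class
of (the conjugacy class of) `g`: it is a continuous `1`-periodic loop
admitting a continuous lift to `ℍ` which is `g`-equivariant. -/
def LoopRep (G : Subgroup SL2) (f : ℝ → SurfaceOf G) (g : G) : Prop :=
  Continuous f ∧ (∀ t : ℝ, f (t + 1) = f t) ∧
  ∃ lift : ℝ → ℍ, Continuous lift ∧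
    (∀ t : ℝ, (Quotient.mk _ (lift t) : SurfaceOf G) = f t) ∧
    (∀ t : ℝ, lift (t + 1) = (g : SL2) • lift t)

/-- The geometric intersection number of the free homotopy classes of `a`
and `b`: the minimal number of intersection points between representative
loops of the two classes. -/
def geomInt (G : Subgroup SL2) (a b : G) : ℕ :=
  sInf {n : ℕ | ∃ f f' : ℝ → SurfaceOf G, LoopRep G f a ∧ LoopRep G f' b ∧
    {p : ℝ × ℝ | p.1 ∈ Ico (0 : ℝ) 1 ∧ p.2 ∈ Ico (0 : ℝ) 1 ∧ f p.1 = f' p.2}.ncard = n}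

/-- `g ∈ G` is peripheral: freely homotopic to a puncture (parabolic) or to
a geodesic boundary component, i.e. a hyperbolic element one of whose
complementary half-planes `U` is precisely invariant under the cyclic group
generated by `g`. -/
def IsPeripheral (G : Subgroup SL2) (g : G) : Prop :=
  IsParabolic (g : SL2) ∨
  (IsHyperbolicIsom (g : SL2) ∧ ∃ U : Set ℍ,
    IsOpen U ∧ U.Nonempty ∧ IsConnected U ∧ Disjoint U (axisSet (g : SL2)) ∧
    frontier U = axisSet (g : SL2) ∧
    (∀ h : G, ((h : SL2) • ·) '' U = U ∨ Disjoint (((h : SL2) • ·) '' U) U) ∧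
    (∀ h : G, ((h : SL2) • ·) '' U = U → ∃ k : ℤ, h = g ^ k))

/-- `br` is the Goldman bracket on the free `ℤ`-module on the free homotopy
classes of oriented closed curves of `F = ℍ/G` (= conjugacy classes of `G`):
it is `ℤ`-bilinear, skew-symmetric, vanishes on non-essential classes and on
classes with disjoint geodesic representatives, and on essential classes it
is given by Goldman's formula `[α,β] = Σ_{gB ∈ J(α,β)} ε(α,β^g)⟨αβ^g⟩`,
the sum over cosets `gB ∈ G/⟨β⟩` whose translate `gA_β` crosses the
fundamental segment `I(α,β) ⊆ A_α`, with geometric intersection signs `ε`. -/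
def IsGoldmanBracket (G : Subgroup SL2)
    (br : (ConjClasses ↥G →₀ ℤ) → (ConjClasses ↥G →₀ ℤ) → (ConjClasses ↥G →₀ ℤ)) : Prop :=
  (∀ x y z, br (x + y) z = br x z + br y z) ∧
  (∀ x y z, br x (y + z) = br x y + br x z) ∧
  (∀ (n : ℤ) (x y), br (n • x) y = n • br x y) ∧
  (∀ (n : ℤ) (x y), br x (n • y) = n • br x y) ∧
  (∀ x y, br x y = - br y x) ∧
  (∀ α β : G, ¬ IsHyperbolicIsom (α : SL2) →
      br (Finsupp.single (ConjClasses.mk α) 1) (Finsupp.single (ConjClasses.mk β) 1) = 0) ∧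
  (∀ α β : G, (∀ g : G, Disjoint (((g : SL2) • ·) '' axisSet (β : SL2)) (axisSet (α : SL2))) →
      br (Finsupp.single (ConjClasses.mk α) 1) (Finsupp.single (ConjClasses.mk β) 1) = 0) ∧
  (∀ α β : G, IsHyperbolicIsom (α : SL2) → IsHyperbolicIsom (β : SL2) →
    axisSet (α : SL2) ≠ axisSet (β : SL2) →
    ∃ s : Finset G,
      (∀ g ∈ s, Meets (α : SL2) (β : SL2) (g : SL2)) ∧
      (∀ g ∈ s, ∀ g' ∈ s, (∃ k : ℤ, g' = g * β ^ k) → g = g') ∧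
      (∀ g : G, Meets (α : SL2) (β : SL2) (g : SL2) → ∃ g' ∈ s, ∃ k : ℤ, g = g' * β ^ k) ∧
      ∃ ε : G → ℤ,
        (∀ g ∈ s, SignCond (α : SL2) ((g : SL2) * (β : SL2) * (g : SL2)⁻¹) (ε g)) ∧
        br (Finsupp.single (ConjClasses.mk α) 1) (Finsupp.single (ConjClasses.mk β) 1) =
          ∑ g ∈ s, ε g • Finsupp.single (ConjClasses.mk (α * (g * β * g⁻¹))) 1)

/-! The half-turn `H_z` about `z ∈ ℍ` (the conjugate of `w ↦ -1/w` by any isometry taking `i`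
to `z`) reverses every geodesic through `z`: `H_{c u} (c s) = c (2u - s)`. Hence `H_{c(t+τ/2)} H_{c t}`
translates the geodesic `c` by `τ`, and since an element of `SL(2,ℝ)` is determined up to sign by
its values at two points of a geodesic, every isometry with axis `c` and translation length `τ`
is `± H_{c(t+τ/2)} H_{c t}`, for any `t`. Applied to `α` at `P` and to `β` ending at `P`,
`αβ = ± H_Q H_P H_P H_R = ± H_Q H_R` because `H_P² = -1`. Finally `H_Q H_R` translates the geodesic
from `R` through `Q` by `2 d(R, Q)`, and an isometry with an axis is conjugate to
`z ↦ e^τ z`, which is hyperbolic with translation length `τ`. -/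

open Real

lemma coe_SL2_smul (g : SL2) (z : ℍ) :
    ((g • z : ℍ) : ℂ) = (g.1 0 0 * z + g.1 0 1) / (g.1 1 0 * z + g.1 1 1) := by
  simp [coe_specialLinearGroup_apply]

lemma SL2_denom_ne_zero (g : SL2) (z : ℍ) : (g.1 1 0 : ℂ) * z + g.1 1 1 ≠ 0 :=
  denom_ne_zero (Matrix.SpecialLinearGroup.toGL g) z

lemma SL2_smul_eq_iff (g : SL2) (z w : ℍ) :
    g • z = w ↔
      g.1 0 0 * z.re + g.1 0 1 = w.re * (g.1 1 0 * z.re + g.1 1 1) - w.im * (g.1 1 0 * z.im) ∧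
      g.1 0 0 * z.im = w.re * (g.1 1 0 * z.im) + w.im * (g.1 1 0 * z.re + g.1 1 1) := by
  rw [UpperHalfPlane.ext_iff, coe_SL2_smul, div_eq_iff (SL2_denom_ne_zero g z), Complex.ext_iff]
  simp only [Complex.add_re, Complex.add_im, Complex.mul_re, Complex.mul_im, Complex.ofReal_re,
    Complex.ofReal_im, coe_re, coe_im]
  ring_nf

lemma neg_SL2_smul (g : SL2) (z : ℍ) : (-g) • z = g • z := by
  rw [UpperHalfPlane.ext_iff, coe_SL2_smul, coe_SL2_smul]
  simp only [Matrix.SpecialLinearGroup.coe_neg, Matrix.neg_apply, Complex.ofReal_neg]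
  rw [← neg_div_neg_eq]
  ring_nf

def imAxis (t : ℝ) : ℍ := ⟨⟨0, exp t⟩, exp_pos t⟩

lemma imAxis_re (t : ℝ) : (imAxis t).re = 0 := rfl
lemma imAxis_im (t : ℝ) : (imAxis t).im = exp t := rfl

lemma isometry_imAxis : Isometry imAxis := isometry_vertical_line 0

lemma eq_imAxis_iff {w : ℍ} {t : ℝ} : w = imAxis t ↔ w.re = 0 ∧ w.im = exp t := by
  rw [UpperHalfPlane.ext_iff, Complex.ext_iff]; rfl

lemma imAxis_zero : imAxis 0 = I :=
  (eq_imAxis_iff.2 ⟨I_re, by rw [I_im, exp_zero]⟩).symm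

lemma cosh_dist_imAxis (s : ℝ) (w : ℍ) :
    2 * w.im * exp s * cosh (dist (imAxis s) w) = w.re ^ 2 + w.im ^ 2 + exp s ^ 2 := by
  rw [cosh_dist, Complex.dist_eq, Complex.sq_norm, Complex.normSq_apply]
  simp only [Complex.sub_re, Complex.sub_im, coe_re, coe_im, imAxis_re, imAxis_im]
  have := exp_pos s
  have := w.im_pos
  field_simp
  ring

lemma eq_imAxis_of_dist_eq {w : ℍ} {t : ℝ} (h0 : dist (imAxis 0) w = |t|)
    (h1 : dist (imAxis 1) w = |1 - t|) : w = imAxis t := by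
  have hc0 := cosh_dist_imAxis 0 w
  have hc1 := cosh_dist_imAxis 1 w
  rw [h0, cosh_abs, cosh_eq, exp_zero, exp_neg] at hc0
  rw [h1, cosh_abs, cosh_eq, exp_sub, exp_neg, exp_sub] at hc1
  have := exp_pos t
  field_simp at hc0 hc1
  have him : w.im = exp t := by
    have : (w.im - exp t) * ((exp 1 - 1) * (exp 1 + 1)) = 0 := by
      linear_combination hc1 - hc0
    have he : 1 < exp 1 := one_lt_exp_iff.2 one_pos
    simpa [sub_eq_zero, (by nlinarith : (exp 1 - 1) * (exp 1 + 1) ≠ 0)] using this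
  refine eq_imAxis_iff.2 ⟨?_, him⟩
  rw [him] at hc0
  have : exp t * w.re ^ 2 = 0 := by linear_combination -hc0
  simpa [(exp_pos t).ne'] using this

def halfTurnI : SL2 := ⟨!![0, -1; 1, 0], by simp [Matrix.det_fin_two]⟩

lemma coe_halfTurnI : (halfTurnI : Matrix (Fin 2) (Fin 2) ℝ) = !![0, -1; 1, 0] := rfl

lemma halfTurnI_smul_imAxis (t : ℝ) : halfTurnI • imAxis t = imAxis (-t) := by
  rw [SL2_smul_eq_iff]
  simp [coe_halfTurnI, imAxis_re, imAxis_im, exp_neg]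

lemma halfTurnI_smul_I : halfTurnI • I = I := by
  simpa [imAxis_zero] using halfTurnI_smul_imAxis 0

lemma halfTurnI_mul_self : halfTurnI * halfTurnI = -1 := by
  ext i j
  fin_cases i <;> fin_cases j <;> simp [coe_halfTurnI, Matrix.mul_apply]

lemma commute_halfTurnI_of_smul_I_eq_I {k : SL2} (hk : k • I = I) : Commute k halfTurnI := by
  rw [SL2_smul_eq_iff] at hk
  simp only [I_re, I_im, mul_zero, mul_one, zero_mul, one_mul, zero_add, zero_sub] at hk
  ext : 1
  rw [Matrix.SpecialLinearGroup.coe_mul, Matrix.SpecialLinearGroup.coe_mul, coe_halfTurnI,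
    Matrix.eta_fin_two k.1]
  simp [hk]

def axialTranslation (τ : ℝ) : SL2 :=
  ⟨!![exp (τ / 2), 0; 0, exp (-(τ / 2))], by simp [Matrix.det_fin_two, ← exp_add]⟩

lemma coe_axialTranslation (τ : ℝ) : (axialTranslation τ : Matrix (Fin 2) (Fin 2) ℝ) =
    !![exp (τ / 2), 0; 0, exp (-(τ / 2))] := rfl

lemma coe_axialTranslation_smul (τ : ℝ) (z : ℍ) :
    ((axialTranslation τ • z : ℍ) : ℂ) = exp τ * z := by
  rw [coe_SL2_smul, div_eq_iff (SL2_denom_ne_zero _ _)]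
  simp only [coe_axialTranslation, Matrix.of_apply, Matrix.cons_val', Matrix.cons_val_zero,
    Matrix.cons_val_one, Matrix.empty_val', Matrix.cons_val_fin_one, Complex.ofReal_zero, zero_mul,
    add_zero, zero_add]
  rw [mul_assoc, mul_comm (z : ℂ), ← mul_assoc, ← Complex.ofReal_mul, ← exp_add]
  ring_nf

lemma axialTranslation_smul_imAxis (τ t : ℝ) : axialTranslation τ • imAxis t = imAxis (t + τ) := by
  rw [eq_imAxis_iff, ← coe_re, ← coe_im, coe_axialTranslation_smul, Complex.re_ofReal_mul,
    Complex.im_ofReal_mul, coe_re, coe_im, imAxis_re, imAxis_im, mul_zero, exp_add]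
  exact ⟨rfl, mul_comm _ _⟩

lemma transLength_le_dist (m : SL2) (z : ℍ) : transLength m ≤ dist z (m • z) :=
  ciInf_le ⟨0, by rintro _ ⟨w, rfl⟩; exact dist_nonneg⟩ z

lemma transLength_neg (m : SL2) : transLength (-m) = transLength m := by
  simp only [transLength, neg_SL2_smul]

lemma transLength_conj (g m : SL2) : transLength (g * m * g⁻¹) = transLength m := by
  unfold transLength
  rw [← (MulAction.surjective g).iInf_comp]
  simp [mul_smul, dist_smul]

lemma transLength_axialTranslation {τ : ℝ} (hτ : 0 ≤ τ) :
    transLength (axialTranslation τ) = τ := by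
  refine le_antisymm ?_ (le_ciInf fun z => ?_)
  · simpa [axialTranslation_smul_imAxis, isometry_imAxis.dist_eq, abs_of_nonneg hτ] using
      transLength_le_dist (axialTranslation τ) (imAxis 0)
  · have him : (axialTranslation τ • z).im = exp τ * z.im := by
      rw [← coe_im, coe_axialTranslation_smul, Complex.im_ofReal_mul, coe_im]
    have := dist_log_im_le z (axialTranslation τ • z)
    rwa [him, log_mul (exp_ne_zero _) z.im_pos.ne', log_exp, Real.dist_eq, sub_add_cancel_right,
      abs_neg, abs_of_nonneg hτ] at this

def halfTurn (z : ℍ) : SL2 := z.toSL2R * halfTurnI * z.toSL2R⁻¹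

lemma halfTurn_I : halfTurn I = halfTurnI := by
  have : I.toSL2R = 1 := by ext i j; fin_cases i <;> fin_cases j <;> simp
  simp [halfTurn, this]

lemma halfTurn_smul (g : SL2) (z : ℍ) : halfTurn (g • z) = g * halfTurn z * g⁻¹ := by
  set k := (g • z).toSL2R⁻¹ * g * z.toSL2R
  have hk : k • I = I := by
    simp only [k, mul_smul, toSL2R_smul_I, inv_smul_eq_iff]
  have hT : g * z.toSL2R = (g • z).toSL2R * k := by simp [k, ← mul_assoc]
  have hkS : k * halfTurnI * k⁻¹ = halfTurnI := by
    rw [(commute_halfTurnI_of_smul_I_eq_I hk).eq, mul_inv_cancel_right]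
  calc halfTurn (g • z) = (g • z).toSL2R * (k * halfTurnI * k⁻¹) * (g • z).toSL2R⁻¹ := by
        rw [hkS, halfTurn]
    _ = (g * z.toSL2R) * halfTurnI * (g * z.toSL2R)⁻¹ := by rw [hT]; group
    _ = g * halfTurn z * g⁻¹ := by rw [halfTurn]; group

lemma halfTurn_mul_self (z : ℍ) : halfTurn z * halfTurn z = -1 := by
  calc halfTurn z * halfTurn z = z.toSL2R * (halfTurnI * halfTurnI) * z.toSL2R⁻¹ := by
        rw [halfTurn]; group
    _ = -1 := by rw [halfTurnI_mul_self]; simp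

lemma halfTurn_smul_halfTurn_smul (z w : ℍ) : halfTurn z • halfTurn z • w = w := by
  rw [smul_smul, halfTurn_mul_self, neg_SL2_smul, one_smul]

lemma halfTurn_imAxis_smul_imAxis (u s : ℝ) :
    halfTurn (imAxis u) • imAxis s = imAxis (2 * u - s) := by
  have hu : imAxis u = axialTranslation u • I := by
    rw [← imAxis_zero, axialTranslation_smul_imAxis, zero_add]
  have hs : (axialTranslation u)⁻¹ • imAxis s = imAxis (s - u) := by
    rw [inv_smul_eq_iff, axialTranslation_smul_imAxis, sub_add_cancel]
  rw [hu, halfTurn_smul, halfTurn_I, mul_smul, mul_smul, hs, halfTurnI_smul_imAxis,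
    axialTranslation_smul_imAxis]
  ring_nf

lemma exists_smul_I_eq_I_and_smul_eq_imAxis (w : ℍ) :
    ∃ k : SL2, k • I = I ∧ k • w = imAxis (dist I w) := by
  set d := dist I w
  -- Solving `k • w = i e^d` for a rotation `k = [[p, q], [-q, p]]` about `i` forces
  -- `(p, q) ∝ (e^d Im w - 1, Re w)`; this vector vanishes only at `w = i e^{-d}`.
  by_cases hw : w = imAxis (-d)
  · exact ⟨halfTurnI, halfTurnI_smul_I, by rw [hw, halfTurnI_smul_imAxis, neg_neg]⟩
  have hcirc := cosh_dist_imAxis 0 w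
  rw [imAxis_zero, exp_zero] at hcirc
  set A := exp d * w.im - 1
  have hN : 0 < A ^ 2 + w.re ^ 2 := by
    by_contra! h
    refine hw (eq_imAxis_iff.2 ⟨by nlinarith, ?_⟩)
    rw [exp_neg]
    field_simp
    nlinarith
  set N := √(A ^ 2 + w.re ^ 2)
  have hN' : N ^ 2 = A ^ 2 + w.re ^ 2 := sq_sqrt hN.le
  have hNpos : 0 < N := sqrt_pos.2 hN
  have hdet : (!![A / N, w.re / N; -w.re / N, A / N] : Matrix (Fin 2) (Fin 2) ℝ).det = 1 := by
    rw [Matrix.det_fin_two_of]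
    field_simp
    linarith
  obtain ⟨k, hk⟩ : ∃ k : SL2, k.1 = !![A / N, w.re / N; -w.re / N, A / N] := ⟨⟨_, hdet⟩, rfl⟩
  refine ⟨k, ?_, ?_⟩ <;>
    simp only [SL2_smul_eq_iff, hk, Matrix.of_apply, Matrix.cons_val', Matrix.cons_val_zero,
      Matrix.cons_val_one, Matrix.empty_val', Matrix.cons_val_fin_one, I_re, I_im, imAxis_re,
      imAxis_im]
  · constructor <;> ring
  · have hE : exp d * exp (-d) = 1 := by rw [← exp_add, add_neg_cancel, exp_zero]
    rw [cosh_eq] at hcirc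
    field_simp
    exact ⟨by ring, by linear_combination (-exp d) * hcirc + w.im * hE⟩

lemma exists_smul_eq_imAxis_zero_and_smul_eq_imAxis_dist (z w : ℍ) :
    ∃ g : SL2, g • z = imAxis 0 ∧ g • w = imAxis (dist z w) := by
  have hz : z.toSL2R⁻¹ • z = I := inv_smul_eq_iff.2 (toSL2R_smul_I z).symm
  obtain ⟨k, hkI, hk⟩ := exists_smul_I_eq_I_and_smul_eq_imAxis (z.toSL2R⁻¹ • w)
  refine ⟨k * z.toSL2R⁻¹, by rw [mul_smul, hz, hkI, imAxis_zero], ?_⟩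
  rw [mul_smul, hk, ← hz, dist_smul]

lemma Isometry.exists_eq_smul_imAxis {c : ℝ → ℍ} (hc : Isometry c) :
    ∃ g : SL2, ∀ t, c t = g • imAxis t := by
  obtain ⟨g, h0, h1⟩ := exists_smul_eq_imAxis_zero_and_smul_eq_imAxis_dist (c 0) (c 1)
  rw [hc.dist_eq, Real.dist_eq, zero_sub, abs_neg, abs_one] at h1
  refine ⟨g⁻¹, fun t => eq_inv_smul_iff.2 (eq_imAxis_of_dist_eq ?_ ?_)⟩
  · rw [← h0, dist_smul, hc.dist_eq, Real.dist_eq, zero_sub, abs_neg]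
  · rw [← h1, dist_smul, hc.dist_eq, Real.dist_eq]

lemma exists_isometry_apply_zero_apply_dist (z w : ℍ) :
    ∃ c : ℝ → ℍ, Isometry c ∧ c 0 = z ∧ c (dist z w) = w := by
  obtain ⟨g, hz, hw⟩ := exists_smul_eq_imAxis_zero_and_smul_eq_imAxis_dist z w
  exact ⟨fun t => g⁻¹ • imAxis t, (isometry_smul ℍ g⁻¹).comp isometry_imAxis,
    by simp [← hz], by simp [← hw]⟩

lemma eq_one_or_eq_neg_one_of_smul_imAxis_eq {m : SL2} (h0 : m • imAxis 0 = imAxis 0)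
    (h1 : m • imAxis 1 = imAxis 1) : m = 1 ∨ m = -1 := by
  rw [SL2_smul_eq_iff] at h0 h1
  simp only [imAxis_re, imAxis_im, exp_zero, mul_zero, zero_mul, mul_one, one_mul, zero_add,
    zero_sub] at h0 h1
  obtain ⟨hb, had⟩ := h0
  have hc : m.1 1 0 = 0 := by
    have he : exp 1 * exp 1 - 1 ≠ 0 := by
      have := one_lt_exp_iff.2 one_pos; nlinarith
    have : m.1 1 0 * (exp 1 * exp 1 - 1) = 0 := by linear_combination h1.1 - hb
    simpa [he] using this
  have hdet := m.2
  rw [Matrix.det_fin_two, hb, hc, ← had] at hdet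
  rcases mul_self_eq_one_iff.1 (by simpa using hdet) with ha | ha
  · left; ext i j; fin_cases i <;> fin_cases j <;> simp [hb, hc, ← had, ha]
  · right; ext i j; fin_cases i <;> fin_cases j <;> simp [hb, hc, ← had, ha]

lemma Isometry.eq_or_eq_neg_of_smul_eq_smul {c : ℝ → ℍ} (hc : Isometry c) {x y : SL2}
    (h0 : x • c 0 = y • c 0) (h1 : x • c 1 = y • c 1) : x = y ∨ x = -y := by
  obtain ⟨g, hg⟩ := hc.exists_eq_smul_imAxis
  have hfix : ∀ t, x • c t = y • c t → (g⁻¹ * y⁻¹ * x * g) • imAxis t = imAxis t := by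
    intro t ht
    rw [mul_smul, mul_smul, mul_smul, ← hg, ht, inv_smul_smul, hg, inv_smul_smul]
  have hx : x = y * (g * (g⁻¹ * y⁻¹ * x * g) * g⁻¹) := by group
  rcases eq_one_or_eq_neg_one_of_smul_imAxis_eq (hfix 0 h0) (hfix 1 h1) with h | h <;>
    rw [h] at hx
  · left; simpa using hx
  · right; simpa using hx

lemma Isometry.halfTurn_apply_smul_apply {c : ℝ → ℍ} (hc : Isometry c) (u s : ℝ) :
    halfTurn (c u) • c s = c (2 * u - s) := by
  obtain ⟨g, hg⟩ := hc.exists_eq_smul_imAxis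
  simp only [hg, halfTurn_smul, mul_smul, inv_smul_smul, halfTurn_imAxis_smul_imAxis]

lemma discr_SL2 (m : SL2) :
    (m : Matrix (Fin 2) (Fin 2) ℝ).discr = (m.1 0 0 + m.1 1 1) ^ 2 - 4 := by
  rw [Matrix.discr_fin_two, Matrix.trace_fin_two, m.2, mul_one]

lemma smul_ne_self_of_isHyperbolic {m : SL2} (hm : (m : Matrix (Fin 2) (Fin 2) ℝ).IsHyperbolic)
    (z : ℍ) : m • z ≠ z := by
  intro hz
  rw [SL2_smul_eq_iff] at hz
  have hdet := m.2
  rw [Matrix.det_fin_two] at hdet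
  rw [Matrix.IsHyperbolic, discr_SL2] at hm
  obtain ⟨hre, him⟩ := hz
  have hy := z.im_pos
  have had : m.1 0 0 - m.1 1 1 = 2 * m.1 1 0 * z.re := by
    have : (m.1 0 0 - m.1 1 1 - 2 * m.1 1 0 * z.re) * z.im = 0 := by linear_combination him
    simpa [hy.ne', sub_eq_zero] using this
  have : (m.1 0 0 + m.1 1 1) ^ 2 - 4 = -4 * (m.1 1 0 * z.im) ^ 2 := by
    linear_combination 4 * hdet + (m.1 0 0 - m.1 1 1 + 2 * m.1 1 0 * z.re) * had
      + 4 * m.1 1 0 * hre - 4 * m.1 1 0 * z.re * had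
  nlinarith

lemma mobius_none_eq_none_iff (m : SL2) : mobius m none = none ↔ m.1 1 0 = 0 := by
  unfold mobius; split_ifs with h <;> simp [h]

lemma mobius_some_eq_some_iff (m : SL2) (x : ℝ) :
    mobius m (some x) = some x ↔ m.1 1 0 * (x * x) + (m.1 1 1 - m.1 0 0) * x + -m.1 0 1 = 0 := by
  have hdet := m.2
  rw [Matrix.det_fin_two] at hdet
  simp only [mobius]
  split_ifs with h
  · simp only [false_iff]
    intro hq
    have : (1 : ℝ) = 0 := by linear_combination m.1 1 0 * hq - (m.1 1 0 * x - m.1 0 0) * h - hdet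
    exact one_ne_zero this
  · rw [Option.some_inj, div_eq_iff h]
    constructor <;> intro h' <;> linear_combination -h'

lemma exists_mobius_fixedPoints_eq_pair {m : SL2}
    (hm : (m : Matrix (Fin 2) (Fin 2) ℝ).IsHyperbolic) :
    ∃ x y : Bd, x ≠ y ∧ {p : Bd | mobius m p = p} = {x, y} := by
  rw [Matrix.IsHyperbolic, discr_SL2] at hm
  have hdet := m.2
  rw [Matrix.det_fin_two] at hdet
  set s := √((m.1 0 0 + m.1 1 1) ^ 2 - 4)
  have hs : 0 < s := sqrt_pos.2 hm
  have hdisc : discrim (m.1 1 0) (m.1 1 1 - m.1 0 0) (-m.1 0 1) = s * s := by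
    rw [mul_self_sqrt hm.le, discrim]
    linear_combination -4 * hdet
  by_cases hc : m.1 1 0 = 0
  · have hda : m.1 1 1 - m.1 0 0 ≠ 0 := by
      rintro h
      rw [discrim, hc, h] at hdisc
      nlinarith
    refine ⟨none, some (m.1 0 1 / (m.1 1 1 - m.1 0 0)), by simp, ?_⟩
    ext (_ | x)
    · simp [mobius_none_eq_none_iff, hc]
    · simp [mobius_some_eq_some_iff, hc, eq_div_iff hda]
      constructor <;> intro h <;> linarith
  · refine ⟨some ((-(m.1 1 1 - m.1 0 0) + s) / (2 * m.1 1 0)),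
      some ((-(m.1 1 1 - m.1 0 0) - s) / (2 * m.1 1 0)), ?_, ?_⟩
    · rw [Ne, Option.some_inj, div_left_inj' (mul_ne_zero two_ne_zero hc)]
      linarith
    ext (_ | x)
    · simp [mobius_none_eq_none_iff, hc]
    · simp [mobius_some_eq_some_iff, quadratic_eq_zero_iff hc hdisc]

lemma isHyperbolicIsom_of_isHyperbolic {m : SL2}
    (hm : (m : Matrix (Fin 2) (Fin 2) ℝ).IsHyperbolic) : IsHyperbolicIsom m :=
  ⟨⟨I, smul_ne_self_of_isHyperbolic hm I⟩, smul_ne_self_of_isHyperbolic hm,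
    exists_mobius_fixedPoints_eq_pair hm⟩

lemma isHyperbolic_axialTranslation {τ : ℝ} (hτ : τ ≠ 0) :
    (axialTranslation τ : Matrix (Fin 2) (Fin 2) ℝ).IsHyperbolic := by
  rw [Matrix.IsHyperbolic, discr_SL2]
  simp only [coe_axialTranslation, Matrix.of_apply, Matrix.cons_val', Matrix.cons_val_zero,
    Matrix.cons_val_one, Matrix.empty_val', Matrix.cons_val_fin_one]
  have hne : exp (τ / 2) - exp (-(τ / 2)) ≠ 0 := by
    rw [sub_ne_zero, Ne, exp_eq_exp]
    intro h; apply hτ; linarith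
  have h1 : exp (τ / 2) * exp (-(τ / 2)) = 1 := by rw [← exp_add, add_neg_cancel, exp_zero]
  rw [show (exp (τ / 2) + exp (-(τ / 2))) ^ 2 - 4 = (exp (τ / 2) - exp (-(τ / 2))) ^ 2 by
    linear_combination 4 * h1]
  positivity

lemma trace_conj (g m : SL2) :
    Matrix.trace ((g * m * g⁻¹ : SL2) : Matrix (Fin 2) (Fin 2) ℝ) =
      Matrix.trace (m : Matrix (Fin 2) (Fin 2) ℝ) := by
  rw [Matrix.SpecialLinearGroup.coe_mul, Matrix.SpecialLinearGroup.coe_mul, Matrix.trace_mul_cycle,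
    ← Matrix.SpecialLinearGroup.coe_mul, inv_mul_cancel, Matrix.SpecialLinearGroup.coe_one,
    one_mul]

lemma isHyperbolic_conj_iff (g m : SL2) :
    ((g * m * g⁻¹ : SL2) : Matrix (Fin 2) (Fin 2) ℝ).IsHyperbolic ↔
      (m : Matrix (Fin 2) (Fin 2) ℝ).IsHyperbolic := by
  simp only [Matrix.IsHyperbolic, Matrix.discr_fin_two, trace_conj, Matrix.SpecialLinearGroup.det_coe]

section Axis

variable {c : ℝ → ℍ} {m : SL2} {τ : ℝ}

lemma IsAxisOf.exists_eq_conj_axialTranslation (h : IsAxisOf c m τ) :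
    ∃ g : SL2, m = g * axialTranslation τ * g⁻¹ ∨ m = -(g * axialTranslation τ * g⁻¹) := by
  obtain ⟨hc, -, hm⟩ := h
  obtain ⟨g, hg⟩ := hc.exists_eq_smul_imAxis
  have key : ∀ t, m • c t = (g * axialTranslation τ * g⁻¹) • c t := fun t => by
    rw [hm, hg, hg, mul_smul, mul_smul, inv_smul_smul, axialTranslation_smul_imAxis]
  exact ⟨g, hc.eq_or_eq_neg_of_smul_eq_smul (key 0) (key 1)⟩

lemma IsAxisOf.transLength_eq (h : IsAxisOf c m τ) : transLength m = τ := by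
  obtain ⟨g, hg | hg⟩ := h.exists_eq_conj_axialTranslation <;>
    simp only [hg, transLength_neg, transLength_conj, transLength_axialTranslation h.2.1.le]

lemma IsAxisOf.isHyperbolicIsom (h : IsAxisOf c m τ) : IsHyperbolicIsom m := by
  apply isHyperbolicIsom_of_isHyperbolic
  obtain ⟨g, hg | hg⟩ := h.exists_eq_conj_axialTranslation <;>
    simp only [hg, Matrix.SpecialLinearGroup.coe_neg, Matrix.isHyperbolic_neg_iff,
      isHyperbolic_conj_iff, isHyperbolic_axialTranslation h.2.1.ne']

lemma IsAxisOf.smul_eq_halfTurn_smul_halfTurn_smul (h : IsAxisOf c m τ) (t : ℝ) (z : ℍ) :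
    m • z = halfTurn (c (t + τ / 2)) • halfTurn (c t) • z := by
  obtain ⟨hc, -, hm⟩ := h
  have key : ∀ s, m • c s = (halfTurn (c (t + τ / 2)) * halfTurn (c t)) • c s := fun s => by
    rw [hm, mul_smul, hc.halfTurn_apply_smul_apply, hc.halfTurn_apply_smul_apply]
    ring_nf
  rcases hc.eq_or_eq_neg_of_smul_eq_smul (key 0) (key 1) with h | h <;>
    rw [h, ← mul_smul]
  exact neg_SL2_smul _ _

end Axis

lemma Isometry.isAxisOf_halfTurn_mul_halfTurn {c : ℝ → ℍ} (hc : Isometry c) {δ : ℝ}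
    (hδ : 0 < δ) : IsAxisOf c (halfTurn (c δ) * halfTurn (c 0)) (2 * δ) :=
  ⟨hc, by positivity, fun t => by
    rw [mul_smul, hc.halfTurn_apply_smul_apply, hc.halfTurn_apply_smul_apply]
    ring_nf⟩

theorem axis_of_product_general (α β : SL2)
    (cα cβ : ℝ → ℍ) (hcα : IsAxisOf cα α (transLength α))
    (hcβ : IsAxisOf cβ β (transLength β))
    (P : ℍ) (hP : axisSet α ∩ axisSet β = {P})
    (tP sP : ℝ) (htP : cα tP = P) (hsP : cβ sP = P) :
    IsHyperbolicIsom (α * β) ∧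
    dist (cα (tP + transLength α / 2)) (cβ (sP - transLength β / 2)) =
      transLength (α * β) / 2 ∧
    ∃ c : ℝ → ℍ, IsAxisOf c (α * β) (transLength (α * β)) ∧
      c 0 = cβ (sP - transLength β / 2) ∧
      c (transLength (α * β) / 2) = cα (tP + transLength α / 2) := by
  set Q := cα (tP + transLength α / 2)
  set R := cβ (sP - transLength β / 2)
  have hRQ : R ≠ Q := by
    intro h
    have hQ : Q ∈ axisSet α ∩ axisSet β := ⟨⟨cα, _, hcα, rfl⟩, h ▸ ⟨cβ, _, hcβ, rfl⟩⟩
    rw [hP, Set.mem_singleton_iff, ← htP] at hQ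
    linarith [hcα.1.injective hQ, hcα.2.1]
  obtain ⟨c, hc, hcR, hcQ⟩ := exists_isometry_apply_zero_apply_dist R Q
  have hQR := hc.isAxisOf_halfTurn_mul_halfTurn (dist_pos.2 hRQ)
  rw [hcR, hcQ] at hQR
  have hαβ : IsAxisOf c (α * β) (2 * dist R Q) := by
    refine ⟨hc, hQR.2.1, fun t => ?_⟩
    rw [← hQR.2.2 t, mul_smul, mul_smul, hcα.smul_eq_halfTurn_smul_halfTurn_smul tP,
      hcβ.smul_eq_halfTurn_smul_halfTurn_smul (sP - transLength β / 2), sub_add_cancel, hsP, htP,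
      halfTurn_smul_halfTurn_smul]
  have hτ := hαβ.transLength_eq
  refine ⟨hαβ.isHyperbolicIsom, by rw [hτ, dist_comm]; ring, c, hτ ▸ hαβ, hcR, ?_⟩
  rw [hτ, mul_div_cancel_left₀ _ two_ne_zero, hcQ]

/-- If the axes of hyperbolic `α`, `β` meet at `P`, let `Q`
be the point of `A_α` at distance `τ_α/2` from `P` in the positive direction
and `R` the point of `A_β` at distance `τ_β/2` from `P` in the negative
direction.  Then `αβ` is hyperbolic, its (oriented) axis passes through `R`
and then `Q`, and `d(Q,R) = τ_{αβ}/2`. -/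
theorem axis_of_product (α β : SL2)
    (hα : IsHyperbolicIsom α) (hβ : IsHyperbolicIsom β)
    (cα cβ : ℝ → ℍ) (hcα : IsAxisOf cα α (transLength α))
    (hcβ : IsAxisOf cβ β (transLength β))
    (P : ℍ) (hP : axisSet α ∩ axisSet β = {P})
    (tP sP : ℝ) (htP : cα tP = P) (hsP : cβ sP = P) :
    IsHyperbolicIsom (α * β) ∧
    dist (cα (tP + transLength α / 2)) (cβ (sP - transLength β / 2)) =
      transLength (α * β) / 2 ∧
    ∃ c : ℝ → ℍ, IsAxisOf c (α * β) (transLength (α * β)) ∧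
      c 0 = cβ (sP - transLength β / 2) ∧
      c (transLength (α * β) / 2) = cα (tP + transLength α / 2) :=
  axis_of_product_general α β cα cβ hcα hcβ P hP tP sP htP hsP
end
end

section
/- Let T be a geodesic triangle in ℍ² and consider the path consisting of two consecutive sides of T meeting at an angle θ ∈ (0, π). Then this concatenated path is a K(θ)-quasi-geodesic, where K(θ) = 1/sin θ + 1/tan θ + 1 when θ ∈ (0, π/2), and K(θ) = 1/sin θ + 1 when θ ∈ [π/2, π). -/
/- Both sides are unit-speed geodesics, so the path is 1-Lipschitz in its parameter and a
subpath over `[s, t]` has length at most `t - s`; it suffices to show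
`sin (θ / 2) * (t - s) ≤ d(γ s, γ t)` and `1 / sin (θ / 2) ≤ K(θ)`. On a single side the
distance is `t - s`. If the subpath turns the corner, with legs `a` and `b` and chord `D`, the
hyperbolic law of cosines `cosh D = cosh a cosh b - cos θ sinh a sinh b` (proved in the
hyperboloid model) rearranges to
`sinh² (D/2) - sin² (θ/2) sinh² ((a+b)/2) = cos² (θ/2) (cosh (a-b) - 1) / 2 ≥ 0`,
and convexity of `sinh` on `[0, ∞)` turns `sinh (D/2) ≥ sin (θ/2) sinh ((a+b)/2)` into
`D ≥ sin (θ/2) (a + b)`. -/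

/- Setup: the hyperbolic plane ℍ (upper half-plane model with its hyperbolic
metric), orientation-preserving isometries identified with elements of
SL(2,ℝ) acting by Möbius transformations (so that PSL(2,ℝ) = SL(2,ℝ)/{±1} is
the isometry group), the ideal boundary ℝ ∪ {∞}, geodesics, axes,
translation lengths, quasi-geodesics, Fuchsian groups and the Goldman
bracket machinery. -/

noncomputable section
open Set UpperHalfPlane ENNReal Metric

open Real

def minkowski (x y : Fin 3 → ℝ) : ℝ := x 0 * y 0 - x 1 * y 1 - x 2 * y 2

/-- The isometry of `ℍ` onto the hyperboloid model `{x | minkowski x x = 1, 0 < x 0}`, with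
inverse `ofHyperboloid`. -/
def toHyperboloid (z : ℍ) : Fin 3 → ℝ :=
  ![(z.re ^ 2 + z.im ^ 2 + 1) / (2 * z.im), (z.re ^ 2 + z.im ^ 2 - 1) / (2 * z.im), z.re / z.im]

def ofHyperboloid (x : Fin 3 → ℝ) : ℂ := (x 2 + Complex.I) / ((x 0 - x 1 : ℝ) : ℂ)

theorem cosh_dist_eq_minkowski (z w : ℍ) :
    cosh (dist z w) = minkowski (toHyperboloid z) (toHyperboloid w) := by
  have := z.im_pos.ne'
  have := w.im_pos.ne'
  rw [cosh_dist']
  simp only [minkowski, toHyperboloid, Matrix.cons_val]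
  field_simp
  ring

theorem minkowski_toHyperboloid_self (z : ℍ) :
    minkowski (toHyperboloid z) (toHyperboloid z) = 1 := by
  rw [← cosh_dist_eq_minkowski, dist_self, cosh_zero]

theorem toHyperboloid_zero_sub_one (z : ℍ) : toHyperboloid z 0 - toHyperboloid z 1 = z.im⁻¹ := by
  have := z.im_pos.ne'
  simp only [toHyperboloid, Matrix.cons_val]
  field_simp
  ring

theorem ofHyperboloid_toHyperboloid (z : ℍ) : ofHyperboloid (toHyperboloid z) = z := by
  have : (z.im : ℂ) ≠ 0 := by exact_mod_cast z.im_pos.ne'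
  rw [ofHyperboloid, toHyperboloid_zero_sub_one, ← Complex.re_add_im (z : ℂ)]
  simp only [toHyperboloid, Matrix.cons_val, coe_re, coe_im]
  push_cast
  field_simp

theorem eq_zero_of_minkowski_self_eq_zero {x e : Fin 3 → ℝ} (hx : minkowski x x = 1)
    (he : minkowski e e = 0) (hxe : minkowski x e = 0) : e = 0 := by
  simp only [minkowski] at hx he hxe
  -- with Cauchy–Schwarz for `(e 1, e 2)` and `(x 1, x 2)` this forces `e 1 = e 2 = 0`
  have hspatial : (e 1 ^ 2 + e 2 ^ 2) * (1 + x 1 ^ 2 + x 2 ^ 2) = (e 1 * x 1 + e 2 * x 2) ^ 2 := by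
    linear_combination (-(1 + x 1 ^ 2 + x 2 ^ 2)) * he - e 0 ^ 2 * hx
      + (e 0 * x 0 + e 1 * x 1 + e 2 * x 2) * hxe
  have h1 : e 1 = 0 := by nlinarith [sq_nonneg (e 1 * x 2 - e 2 * x 1), sq_nonneg (e 2)]
  have h2 : e 2 = 0 := by nlinarith [sq_nonneg (e 1 * x 2 - e 2 * x 1), sq_nonneg (e 1)]
  have h0 : e 0 = 0 := by nlinarith
  ext i; fin_cases i <;> assumption

theorem eq_cosh_smul_add_sinh_smul {x₀ x₁ x : Fin 3 → ℝ} {t : ℝ} (h₀ : minkowski x₀ x₀ = 1)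
    (h₁ : minkowski x₁ x₁ = 1) (h : minkowski x x = 1) (h₀₁ : minkowski x₀ x₁ = cosh 1)
    (h₀x : minkowski x₀ x = cosh t) (h₁x : minkowski x₁ x = cosh (t - 1)) :
    x = cosh t • x₀ + sinh t • (sinh 1)⁻¹ • (x₁ - cosh 1 • x₀) := by
  have hs : sinh 1 ≠ 0 := (sinh_pos_iff.2 one_pos).ne'
  have hsub : cosh (t - 1) = cosh t * cosh 1 - sinh t * sinh 1 := cosh_sub t 1
  -- `e` is a null vector orthogonal to the timelike `x₀`, hence zero.
  set e := sinh 1 • x - (cosh t * sinh 1 - sinh t * cosh 1) • x₀ - sinh t • x₁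
  have he : e = 0 := by
    apply eq_zero_of_minkowski_self_eq_zero h₀
    · simp only [e, minkowski, Pi.sub_apply, Pi.smul_apply, smul_eq_mul] at *
      linear_combination sinh 1 ^ 2 * h + (cosh t * sinh 1 - sinh t * cosh 1) ^ 2 * h₀
        + sinh t ^ 2 * h₁ - 2 * sinh 1 * (cosh t * sinh 1 - sinh t * cosh 1) * h₀x
        - 2 * sinh 1 * sinh t * (h₁x.trans hsub)
        + 2 * (cosh t * sinh 1 - sinh t * cosh 1) * sinh t * h₀₁
        - sinh 1 ^ 2 * cosh_sq_sub_sinh_sq t - sinh t ^ 2 * cosh_sq_sub_sinh_sq 1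
    · simp only [e, minkowski, Pi.sub_apply, Pi.smul_apply, smul_eq_mul] at *
      linear_combination sinh 1 * h₀x - (cosh t * sinh 1 - sinh t * cosh 1) * h₀ - sinh t * h₀₁
  ext i
  have hi := congrFun he i
  simp only [e, Pi.sub_apply, Pi.smul_apply, Pi.add_apply, smul_eq_mul, Pi.zero_apply] at hi ⊢
  field_simp
  linear_combination hi

theorem Isometry.exists_toHyperboloid_eq {c : ℝ → ℍ} (hc : Isometry c) (t₀ : ℝ) :
    ∃ w, minkowski w w = -1 ∧ minkowski (toHyperboloid (c t₀)) w = 0 ∧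
      ∀ t, toHyperboloid (c (t₀ + t)) = cosh t • toHyperboloid (c t₀) + sinh t • w := by
  have key : ∀ s t, minkowski (toHyperboloid (c (t₀ + s))) (toHyperboloid (c (t₀ + t))) =
      cosh (s - t) := by
    intro s t
    rw [← cosh_dist_eq_minkowski, hc.dist_eq, Real.dist_eq, cosh_abs, add_sub_add_left_eq_sub]
  have h₀ := key 0 0
  have h₁ := key 1 1
  have h₀₁ := key 0 1
  simp only [add_zero, sub_self, cosh_zero, zero_sub, cosh_neg] at h₀ h₁ h₀₁
  have hs : sinh 1 ≠ 0 := (sinh_pos_iff.2 one_pos).ne'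
  refine ⟨(sinh 1)⁻¹ • (toHyperboloid (c (t₀ + 1)) - cosh 1 • toHyperboloid (c t₀)), ?_, ?_,
    fun t => eq_cosh_smul_add_sinh_smul h₀ h₁ (by simpa using key t t) h₀₁ ?_ ?_⟩
  · simp only [minkowski, Pi.sub_apply, Pi.smul_apply, smul_eq_mul] at *
    field_simp
    linear_combination h₁ - 2 * cosh 1 * h₀₁ + cosh 1 ^ 2 * h₀ - cosh_sq_sub_sinh_sq 1
  · simp only [minkowski, Pi.sub_apply, Pi.smul_apply, smul_eq_mul] at *
    field_simp
    linear_combination h₀₁ - cosh 1 * h₀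
  · simpa using key 0 t
  · rw [key, ← cosh_neg, neg_sub]

/-- `z.im * unitTangent z w` is the derivative of `ofHyperboloid` at `toHyperboloid z` in the
direction `w`; for a unit tangent vector `w` it is a Euclidean unit vector. -/
def unitTangent (z : ℍ) (w : Fin 3 → ℝ) : ℂ := ⟨w 2 - z.re * (w 0 - w 1), -(z.im * (w 0 - w 1))⟩

theorem hasDerivAt_ofHyperboloid_cosh_smul_add_sinh_smul (z : ℍ) (w : Fin 3 → ℝ) :
    HasDerivAt (fun t => ofHyperboloid (cosh t • toHyperboloid z + sinh t • w))
      (z.im * unitTangent z w) 0 := by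
  have hcomb : ∀ a b : ℝ, HasDerivAt (fun t => cosh t * a + sinh t * b) b 0 := fun a b => by
    have := ((hasDerivAt_cosh 0).mul_const a).add ((hasDerivAt_sinh 0).mul_const b)
    rwa [sinh_zero, cosh_zero, zero_mul, one_mul, zero_add] at this
  set x := toHyperboloid z
  have hnum : HasDerivAt (fun t => ((cosh t * x 2 + sinh t * w 2 : ℝ) : ℂ) + Complex.I)
      (w 2 : ℂ) 0 := (hcomb _ _).ofReal_comp.add_const _
  have hden : HasDerivAt
      (fun t => ((cosh t * x 0 + sinh t * w 0 - (cosh t * x 1 + sinh t * w 1) : ℝ) : ℂ))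
      ((w 0 - w 1 : ℝ) : ℂ) 0 := ((hcomb _ _).sub (hcomb _ _)).ofReal_comp
  have hx : x 0 - x 1 = z.im⁻¹ := toHyperboloid_zero_sub_one z
  have : (z.im : ℂ) ≠ 0 := by exact_mod_cast z.im_pos.ne'
  refine (hnum.div hden (by simpa [hx] using this)).congr_deriv ?_
  simp only [cosh_zero, sinh_zero, one_mul, zero_mul, add_zero, hx]
  rw [unitTangent, Complex.mk_eq_add_mul_I]
  simp only [x, toHyperboloid, Matrix.cons_val]
  push_cast
  field_simp
  ring

theorem dir_eq_of_toHyperboloid_eq {c : ℝ → ℍ} {t₀ : ℝ} {w : Fin 3 → ℝ}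
    (hw : ∀ t, toHyperboloid (c (t₀ + t)) = cosh t • toHyperboloid (c t₀) + sinh t • w) :
    dir c t₀ = (c t₀).im * unitTangent (c t₀) w := by
  have hc : (fun s => (c s : ℂ)) =
      fun s => ofHyperboloid (cosh (s - t₀) • toHyperboloid (c t₀) + sinh (s - t₀) • w) := by
    ext1 s
    rw [← hw, add_sub_cancel, ofHyperboloid_toHyperboloid]
  have h := hasDerivAt_ofHyperboloid_cosh_smul_add_sinh_smul (c t₀) w
  rw [← sub_self t₀] at h
  rw [dir, hc, (h.comp_sub_const t₀ t₀).deriv]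

theorem re_unitTangent_mul_conj {z : ℍ} {w₁ w₂ : Fin 3 → ℝ}
    (h₁ : minkowski (toHyperboloid z) w₁ = 0) (h₂ : minkowski (toHyperboloid z) w₂ = 0) :
    (unitTangent z w₂ * (starRingEnd ℂ) (unitTangent z w₁)).re = -minkowski w₁ w₂ := by
  have := z.im_pos.ne'
  simp only [minkowski, toHyperboloid, Matrix.cons_val] at h₁ h₂ ⊢
  field_simp at h₁ h₂
  simp only [unitTangent, Complex.mul_re, Complex.conj_re, Complex.conj_im]
  linear_combination ((w₂ 0 - w₂ 1) / 2) * h₁ + ((w₁ 0 - w₁ 1) / 2) * h₂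

theorem norm_unitTangent {z : ℍ} {w : Fin 3 → ℝ} (hw : minkowski w w = -1)
    (hzw : minkowski (toHyperboloid z) w = 0) : ‖unitTangent z w‖ = 1 := by
  have h := re_unitTangent_mul_conj hzw hzw
  rw [Complex.mul_conj, hw, neg_neg, Complex.ofReal_re, Complex.normSq_eq_norm_sq] at h
  exact (pow_eq_one_iff_of_nonneg (norm_nonneg _) two_ne_zero).1 h

theorem cos_vecAngle_neg_mul_mul {r : ℝ} (hr : r ≠ 0) {u v : ℂ} (hu : ‖u‖ = 1) (hv : ‖v‖ = 1) :
    cos (vecAngle (-(r * u)) (r * v)) = -(v * (starRingEnd ℂ) u).re := by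
  have hζ : (r * v) / (-(r * u)) = -(v * (starRingEnd ℂ) u) := by
    rw [div_neg, mul_div_mul_left _ _ (by exact_mod_cast hr), div_eq_mul_inv, Complex.inv_def,
      Complex.normSq_eq_norm_sq, hu]
    simp
  have hζ1 : ‖-(v * (starRingEnd ℂ) u)‖ = 1 := by simp [hu, hv]
  rw [vecAngle, hζ, Complex.cos_arg (norm_ne_zero_iff.1 (by simp [hζ1])), hζ1, div_one,
    Complex.neg_re]

theorem hyperbolic_law_cos {c₁ c₂ : ℝ → ℍ} (h₁ : Isometry c₁) (h₂ : Isometry c₂) {d : ℝ}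
    (hd : c₁ d = c₂ 0) (a b : ℝ) :
    cosh (dist (c₁ (d - a)) (c₂ b)) =
      cosh a * cosh b - cos (vecAngle (-dir c₁ d) (dir c₂ 0)) * (sinh a * sinh b) := by
  obtain ⟨w₁, hw₁, hzw₁, hc₁⟩ := h₁.exists_toHyperboloid_eq d
  obtain ⟨w₂, hw₂, hzw₂, hc₂⟩ := h₂.exists_toHyperboloid_eq 0
  rw [← hd] at hzw₂
  have hangle : cos (vecAngle (-dir c₁ d) (dir c₂ 0)) = minkowski w₁ w₂ := by
    rw [dir_eq_of_toHyperboloid_eq hc₁, dir_eq_of_toHyperboloid_eq hc₂, ← hd,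
      cos_vecAngle_neg_mul_mul (c₁ d).im_pos.ne' (norm_unitTangent hw₁ hzw₁)
        (norm_unitTangent hw₂ hzw₂), re_unitTangent_mul_conj hzw₁ hzw₂, neg_neg]
  have hx₀ := minkowski_toHyperboloid_self (c₁ d)
  rw [hangle, cosh_dist_eq_minkowski, sub_eq_add_neg, hc₁, ← zero_add b, hc₂, ← hd]
  simp only [minkowski, Pi.add_apply, Pi.smul_apply, smul_eq_mul, cosh_neg, sinh_neg,
    zero_add] at hx₀ hzw₁ hzw₂ ⊢
  linear_combination cosh a * cosh b * hx₀ - sinh a * cosh b * hzw₁ + cosh a * sinh b * hzw₂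

namespace Real

theorem convexOn_sinh : ConvexOn ℝ (Ici 0) sinh := by
  refine MonotoneOn.convexOn_of_deriv (convex_Ici 0) continuous_sinh.continuousOn
    differentiable_sinh.differentiableOn ?_
  rw [Real.deriv_sinh, interior_Ici]
  intro x hx y hy hxy
  rw [cosh_le_cosh, abs_of_pos hx, abs_of_pos hy]
  exact hxy

theorem sinh_mul_le_mul_sinh {μ u : ℝ} (hμ₀ : 0 ≤ μ) (hμ₁ : μ ≤ 1) (hu : 0 ≤ u) :
    sinh (μ * u) ≤ μ * sinh u := by
  simpa using convexOn_sinh.2 (mem_Ici.2 hu) (mem_Ici.2 le_rfl) hμ₀ (sub_nonneg.2 hμ₁)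
    (add_sub_cancel μ 1)

end Real

theorem sin_half_mul_add_le_of_cosh_eq {θ a b D : ℝ} (ha : 0 ≤ a) (hb : 0 ≤ b) (hD : 0 ≤ D)
    (h : cosh D = cosh a * cosh b - cos θ * (sinh a * sinh b)) : sin (θ / 2) * (a + b) ≤ D := by
  set s := sin (θ / 2)
  rcases le_or_gt s 0 with hs | hs
  · nlinarith
  have hcos : cos θ = 1 - 2 * s ^ 2 := by
    rw [← cos_two_mul_eq_one_sub, mul_div_cancel₀ _ two_ne_zero]
  have hhalf : ∀ x, cosh x = 1 + 2 * sinh (x / 2) ^ 2 := fun x => by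
    have := cosh_two_mul (x / 2)
    rw [mul_div_cancel₀ _ two_ne_zero] at this
    linarith [cosh_sq (x / 2)]
  have hgap : sinh (D / 2) ^ 2 - (s * sinh ((a + b) / 2)) ^ 2 =
      (1 - s ^ 2) * (cosh (a - b) - 1) / 2 := by
    have hcoshD := hhalf D
    have hcoshab := hhalf (a + b)
    rw [cosh_add] at hcoshab
    rw [cosh_sub]
    linear_combination (-1 / 2) * hcoshD + (s ^ 2 / 2) * hcoshab + (1 / 2) * h
      - (sinh a * sinh b / 2) * hcos
  have hsq : (s * sinh ((a + b) / 2)) ^ 2 ≤ sinh (D / 2) ^ 2 := by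
    have : 0 ≤ (1 - s ^ 2) * (cosh (a - b) - 1) :=
      mul_nonneg (by nlinarith [sin_le_one (θ / 2)]) (by linarith [one_le_cosh (a - b)])
    linarith
  have hsinh : s * sinh ((a + b) / 2) ≤ sinh (D / 2) :=
    (pow_le_pow_iff_left₀ (by positivity) (sinh_nonneg_iff.2 (by linarith)) two_ne_zero).1 hsq
  have : sinh (s * ((a + b) / 2)) ≤ sinh (D / 2) :=
    (sinh_mul_le_mul_sinh hs.le (sin_le_one _) (by linarith)).trans hsinh
  linarith [sinh_le_sinh.1 this]

def quasiGeodesicConst (θ : ℝ) : ℝ :=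
  if θ < π / 2 then 1 / sin θ + 1 / tan θ + 1 else 1 / sin θ + 1

theorem inv_sin_half_le_quasiGeodesicConst {θ : ℝ} (hθ : θ ∈ Ioo 0 π) :
    (sin (θ / 2))⁻¹ ≤ quasiGeodesicConst θ := by
  obtain ⟨hθ₀, hθπ⟩ := hθ
  have hs : 0 < sin (θ / 2) := sin_pos_of_pos_of_lt_pi (by linarith) (by linarith)
  have hsinθ : 0 < sin θ := sin_pos_of_pos_of_lt_pi hθ₀ hθπ
  have hcos : cos θ = 1 - 2 * sin (θ / 2) ^ 2 := by
    rw [← cos_two_mul_eq_one_sub, mul_div_cancel₀ _ two_ne_zero]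
  unfold quasiGeodesicConst
  split_ifs with hacute
  · have hc : 0 < cos (θ / 2) := cos_pos_of_mem_Ioo ⟨by linarith, by linarith⟩
    have hsin : sin θ = 2 * sin (θ / 2) * cos (θ / 2) := by
      rw [← sin_two_mul, mul_div_cancel₀ _ two_ne_zero]
    have hK : 1 / sin θ + 1 / tan θ + 1 = (cos (θ / 2) + sin (θ / 2)) / sin (θ / 2) := by
      rw [tan_eq_sin_div_cos, one_div_div, hsin, hcos]
      field_simp
      nlinarith [sin_sq_add_cos_sq (θ / 2)]
    rw [hK, inv_eq_one_div]
    gcongr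
    nlinarith [sin_sq_add_cos_sq (θ / 2), sin_le_one (θ / 2), cos_le_one (θ / 2)]
  · have hobtuse : cos θ ≤ 0 := cos_nonpos_of_pi_div_two_le_of_le (not_lt.1 hacute) (by linarith)
    have hs2 : 1 / 2 ≤ sin (θ / 2) := by nlinarith
    have : 1 ≤ 1 / sin θ := by rw [le_div_iff₀ hsinθ]; linarith [sin_le_one θ]
    have : (sin (θ / 2))⁻¹ ≤ 2 := by rw [inv_le_comm₀ hs two_pos]; linarith
    linarith

theorem sin_half_mul_add_le_dist {c₁ c₂ : ℝ → ℍ} (h₁ : Isometry c₁) (h₂ : Isometry c₂) {d θ : ℝ}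
    (hd : c₁ d = c₂ 0) (hangle : |vecAngle (-dir c₁ d) (dir c₂ 0)| = θ) {a b : ℝ} (ha : 0 ≤ a)
    (hb : 0 ≤ b) : sin (θ / 2) * (a + b) ≤ dist (c₁ (d - a)) (c₂ b) := by
  refine sin_half_mul_add_le_of_cosh_eq ha hb dist_nonneg ?_
  rw [hyperbolic_law_cos h₁ h₂ hd, ← hangle, cos_abs]

theorem LipschitzOnWith.Icc_union_Icc {E : Type*} [PseudoMetricSpace E] {f : ℝ → E} {K : NNReal}
    {a b c : ℝ} (hab : LipschitzOnWith K f (Icc a b)) (hbc : LipschitzOnWith K f (Icc b c)) :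
    LipschitzOnWith K f (Icc a c) := by
  refine LipschitzOnWith.of_dist_le_mul fun u hu v hv => ?_
  wlog huv : u ≤ v generalizing u v
  · rw [dist_comm, dist_comm u]; exact this v hv u hu (le_of_not_ge huv)
  rcases le_total v b with hvb | hbv
  · exact hab.dist_le_mul u ⟨hu.1, huv.trans hvb⟩ v ⟨hv.1, hvb⟩
  rcases le_total b u with hbu | hub
  · exact hbc.dist_le_mul u ⟨hbu, huv.trans hv.2⟩ v ⟨hbv, hv.2⟩
  calc dist (f u) (f v) ≤ dist (f u) (f b) + dist (f b) (f v) := dist_triangle _ _ _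
    _ ≤ K * dist u b + K * dist b v := add_le_add
        (hab.dist_le_mul u ⟨hu.1, hub⟩ b ⟨hu.1.trans hub, le_rfl⟩)
        (hbc.dist_le_mul b ⟨le_rfl, hbv.trans hv.2⟩ v ⟨hbv, hv.2⟩)
    _ = K * dist u v := by
      rw [Real.dist_eq, Real.dist_eq, Real.dist_eq, abs_of_nonpos (by linarith),
        abs_of_nonpos (by linarith), abs_of_nonpos (by linarith)]
      ring

theorem pathLength_le_of_lipschitzOnWith {γ : ℝ → ℍ} {K : NNReal} {s t : ℝ}
    (h : LipschitzOnWith K γ (Icc s t)) : pathLength γ s t ≤ K * ENNReal.ofReal (t - s) := by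
  simpa [pathLength] using h.comp_eVariationOn_le (mapsTo_id _)

theorem lipschitzOnWith_of_concat {c₁ c₂ γ : ℝ → ℍ} (h₁ : Isometry c₁) (h₂ : Isometry c₂)
    {d L : ℝ} (hγ₁ : ∀ s ∈ Icc 0 d, γ s = c₁ s) (hγ₂ : ∀ s ∈ Icc d L, γ s = c₂ (s - d)) :
    LipschitzOnWith 1 γ (Icc 0 L) :=
  LipschitzOnWith.Icc_union_Icc
    (fun u hu v hv => by rw [hγ₁ u hu, hγ₁ v hv]; exact h₁.lipschitz u v)
    (fun u hu v hv => by
      rw [hγ₂ u hu, hγ₂ v hv]; exact (h₂.comp (IsometryEquiv.subRight d).isometry).lipschitz u v)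

theorem sin_half_mul_sub_le_dist_of_concat {c₁ c₂ γ : ℝ → ℍ} (h₁ : Isometry c₁)
    (h₂ : Isometry c₂) {d L θ : ℝ} (hd : c₁ d = c₂ 0)
    (hangle : |vecAngle (-dir c₁ d) (dir c₂ 0)| = θ)
    (hγ₁ : ∀ s ∈ Icc 0 d, γ s = c₁ s) (hγ₂ : ∀ s ∈ Icc d L, γ s = c₂ (s - d))
    {s t : ℝ} (hs : 0 ≤ s) (hst : s ≤ t) (ht : t ≤ L) :
    sin (θ / 2) * (t - s) ≤ dist (γ s) (γ t) := by
  have hle : sin (θ / 2) * (t - s) ≤ t - s :=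
    mul_le_of_le_one_left (sub_nonneg.2 hst) (sin_le_one _)
  rcases le_total t d with htd | hdt
  · rwa [hγ₁ s ⟨hs, hst.trans htd⟩, hγ₁ t ⟨hs.trans hst, htd⟩, h₁.dist_eq, dist_comm,
      Real.dist_eq, abs_of_nonneg (sub_nonneg.2 hst)]
  rcases le_total d s with hds | hsd
  · rwa [hγ₂ s ⟨hds, hst.trans ht⟩, hγ₂ t ⟨hdt, ht⟩, h₂.dist_eq, dist_comm, Real.dist_eq,
      sub_sub_sub_cancel_right, abs_of_nonneg (sub_nonneg.2 hst)]
  rw [hγ₁ s ⟨hs, hsd⟩, hγ₂ t ⟨hdt, ht⟩]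
  convert sin_half_mul_add_le_dist h₁ h₂ hd hangle (sub_nonneg.2 hsd) (sub_nonneg.2 hdt) using 3
    <;> ring

theorem two_sides_quasigeodesic_general (P Q R : ℍ) (c₁ c₂ : ℝ → ℍ)
    (h₁ : Isometry c₁) (h₂ : Isometry c₂)
    (hQ : c₁ (dist P Q) = Q)
    (hQ' : c₂ 0 = Q)
    (θ : ℝ) (hθ : θ ∈ Ioo 0 Real.pi)
    (hangle : |vecAngle (-(dir c₁ (dist P Q))) (dir c₂ 0)| = θ)
    (γ : ℝ → ℍ)
    (hγ₁ : ∀ s ∈ Icc 0 (dist P Q), γ s = c₁ s)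
    (hγ₂ : ∀ s ∈ Icc (dist P Q) (dist P Q + dist Q R), γ s = c₂ (s - dist P Q)) :
    ∀ s t : ℝ, 0 ≤ s → s ≤ t → t ≤ dist P Q + dist Q R →
      pathLength γ s t ≤ ENNReal.ofReal
        ((if θ < Real.pi / 2 then 1 / Real.sin θ + 1 / Real.tan θ + 1
          else 1 / Real.sin θ + 1) * dist (γ s) (γ t)) := by
  intro s t hs hst ht
  have hlength : pathLength γ s t ≤ ENNReal.ofReal (t - s) := by
    simpa using pathLength_le_of_lipschitzOnWith
      ((lipschitzOnWith_of_concat h₁ h₂ hγ₁ hγ₂).mono (Icc_subset_Icc hs ht))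
  have hdist := sin_half_mul_sub_le_dist_of_concat h₁ h₂ (hQ.trans hQ'.symm) hangle hγ₁ hγ₂ hs
    hst ht
  have hsin : 0 < sin (θ / 2) :=
    sin_pos_of_pos_of_lt_pi (by linarith [hθ.1]) (by linarith [hθ.2, pi_pos])
  refine hlength.trans (ENNReal.ofReal_le_ofReal ?_)
  calc t - s ≤ (sin (θ / 2))⁻¹ * dist (γ s) (γ t) := by rwa [le_inv_mul_iff₀ hsin]
    _ ≤ quasiGeodesicConst θ * dist (γ s) (γ t) := by
      gcongr; exact inv_sin_half_le_quasiGeodesicConst hθ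

/-- The concatenation of two sides `[P,Q]`, `[Q,R]` of a
geodesic triangle in `ℍ` meeting at interior angle `θ ∈ (0,π)` is a
`K(θ)`-quasi-geodesic, with `K(θ) = 1/sin θ + 1/tan θ + 1` for
`θ ∈ (0,π/2)` and `K(θ) = 1/sin θ + 1` for `θ ∈ [π/2,π)`. -/
theorem two_sides_quasigeodesic (P Q R : ℍ) (c₁ c₂ : ℝ → ℍ)
    (h₁ : Isometry c₁) (h₂ : Isometry c₂)
    (hP : c₁ 0 = P) (hQ : c₁ (dist P Q) = Q)
    (hQ' : c₂ 0 = Q) (hR : c₂ (dist Q R) = R)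
    (θ : ℝ) (hθ : θ ∈ Ioo 0 Real.pi)
    (hangle : |vecAngle (-(dir c₁ (dist P Q))) (dir c₂ 0)| = θ)
    (γ : ℝ → ℍ)
    (hγ₁ : ∀ s ∈ Icc 0 (dist P Q), γ s = c₁ s)
    (hγ₂ : ∀ s ∈ Icc (dist P Q) (dist P Q + dist Q R), γ s = c₂ (s - dist P Q)) :
    ∀ s t : ℝ, 0 ≤ s → s ≤ t → t ≤ dist P Q + dist Q R →
      pathLength γ s t ≤ ENNReal.ofReal
        ((if θ < Real.pi / 2 then 1 / Real.sin θ + 1 / Real.tan θ + 1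
          else 1 / Real.sin θ + 1) * dist (γ s) (γ t)) :=
  two_sides_quasigeodesic_general P Q R c₁ c₂ h₁ h₂ hQ hQ' θ hθ hangle γ hγ₁ hγ₂

end
end

section
/- Let α, β be hyperbolic elements of a discrete torsion-free group G ≤ PSL₂(ℝ) with intersecting axes, τ_α ≤ L, τ_β ≤ L, and let K, C be the associated constants. Let m be a positive integer with m·τ_α > 6KC, and let I⁰ be the segment of γ(αᵐ, β) lying on (a translate of) A_α of length m·τ_α. Then the open neighbourhood U ⊂ N_C(I⁰), bounded by the geodesics perpendicular to I⁰ at distance 3KC from its endpoints, contains a subsegment J of I⁰ of length at least m·τ_α − 6KC, and the closure of U is disjoint from N_C(Iᵏ) for every other geodesic piece Iᵏ of γ(αᵐ, β). -/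
/- Setup: the hyperbolic plane ℍ (upper half-plane model with its hyperbolic
metric), orientation-preserving isometries identified with elements of
SL(2,ℝ) acting by Möbius transformations (so that PSL(2,ℝ) = SL(2,ℝ)/{±1} is
the isometry group), the ideal boundary ℝ ∪ {∞}, geodesics, axes,
translation lengths, quasi-geodesics, Fuchsian groups and the Goldman
bracket machinery. -/

noncomputable section
open Set UpperHalfPlane ENNReal Metric

/- A hyperbolic element `α` has two fixed points on `∂ℍ`, i.e. two independent real eigenvectors,
so it is conjugate in `SL(2,ℝ)` to a dilation `z ↦ c z`. A dilation moves every point by at least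
`|log c|`, with equality on the imaginary axis; hence `τ_α ≤ |log c|` while `αᵐ` moves every point
by at least `m |log c|`, so the piece `I⁰ = γ [0, 1/2]`, which joins `γ 0` to `αᵐ (γ 0)`, has length
`D ≥ m τ_α > 6KC`. Removing the two end pieces of length `3KC` leaves `J`, and `U` is its open
`C`-neighbourhood. For `s ∈ J` and `t` outside `[0, 1/2]`, the quasi-geodesic inequality applied
to the subpath between `s` and `t`, which passes through an endpoint of `I⁰`, gives
`3KC ≤ K d(γ s, γ t)`; so the closed `C`-neighbourhood of `J` misses the open `C`-neighbourhood
of every other piece. -/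

namespace UpperHalfPlane

theorem abs_log_le_dist_of_coe_eq_mul {z w : ℍ} {c : ℝ} (h : (w : ℂ) = c * z) :
    |Real.log c| ≤ dist z w := by
  have him : w.im = c * z.im := by simpa using congrArg Complex.im h
  have hc : c ≠ 0 := by
    rintro rfl
    exact w.im_pos.ne' (by simpa using him)
  calc |Real.log c| = dist (Real.log z.im) (Real.log w.im) := by
        rw [him, Real.log_mul hc z.im_ne_zero, Real.dist_eq, abs_sub_comm]; ring_nf
    _ ≤ dist z w := dist_log_im_le z w

theorem dist_I_eq_abs_log_of_coe_eq_mul {w : ℍ} {c : ℝ} (h : (w : ℂ) = c * Complex.I) :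
    dist I w = |Real.log c| := by
  have hre : w.re = 0 := by simpa using congrArg Complex.re h
  have him : w.im = c := by simpa using congrArg Complex.im h
  rw [dist_of_re_eq (by simp [hre]), I_im, him, Real.log_one, Real.dist_eq, zero_sub, abs_neg]

end UpperHalfPlane

theorem coe_pow_smul_eq_mul {X : SL2} {c : ℝ} (h : ∀ z : ℍ, ((X • z : ℍ) : ℂ) = c * z)
    (n : ℕ) (z : ℍ) : ((X ^ n • z : ℍ) : ℂ) = (c ^ n : ℝ) * z := by
  induction n generalizing z with
  | zero => simp
  | succ n ih => rw [pow_succ, mul_smul, ih, h]; push_cast; ring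

section Eigenvectors

open Matrix

def homCoord : Bd → Fin 2 → ℝ
  | none => ![1, 0]
  | some r => ![r, 1]

theorem exists_mulVec_homCoord_eq_smul {g : SL2} {p : Bd} (hp : mobius g p = p) :
    ∃ l : ℝ, g.1 *ᵥ homCoord p = l • homCoord p := by
  cases p with
  | none =>
    have hc : g.1 1 0 = 0 := by
      by_contra hc
      simp [mobius, hc] at hp
    exact ⟨g.1 0 0, by ext i; fin_cases i <;> simp [homCoord, mulVec, dotProduct, hc]⟩
  | some r =>
    have hden : g.1 1 0 * r + g.1 1 1 ≠ 0 := by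
      intro hden
      simp [mobius, hden] at hp
    have hfix : g.1 0 0 * r + g.1 0 1 = r * (g.1 1 0 * r + g.1 1 1) := by
      simp only [mobius, if_neg hden, Option.some.injEq] at hp
      rwa [div_eq_iff hden] at hp
    refine ⟨g.1 1 0 * r + g.1 1 1, ?_⟩
    ext i
    fin_cases i
    · simp [homCoord, mulVec, dotProduct]
      linear_combination hfix
    · simp [homCoord, mulVec, dotProduct]

theorem det_homCoord_ne_zero {p q : Bd} (h : p ≠ q) :
    homCoord p 0 * homCoord q 1 - homCoord q 0 * homCoord p 1 ≠ 0 := by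
  cases p <;> cases q <;> simp_all [homCoord, sub_eq_zero]

theorem coe_conj_smul_eq_mul_of_mul_eq_mul_diag {α N : SL2} {l₁ l₂ : ℝ}
    (h : (α : Matrix (Fin 2) (Fin 2) ℝ) * N = N * !![l₁, 0; 0, l₂]) (z : ℍ) :
    (((N⁻¹ * α * N) • z : ℍ) : ℂ) = (l₁ / l₂ : ℝ) * z := by
  have hconj : ((N⁻¹ * α * N : SL2) : Matrix (Fin 2) (Fin 2) ℝ) = !![l₁, 0; 0, l₂] := by
    rw [Matrix.SpecialLinearGroup.coe_mul, Matrix.SpecialLinearGroup.coe_mul, Matrix.mul_assoc, h,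
      ← Matrix.mul_assoc, ← Matrix.SpecialLinearGroup.coe_mul, inv_mul_cancel,
      Matrix.SpecialLinearGroup.coe_one, Matrix.one_mul]
  rw [coe_specialLinearGroup_apply]
  simp [hconj]
  ring

theorem IsHyperbolicIsom.exists_conj_smul_eq_mul {α : SL2} (hα : IsHyperbolicIsom α) :
    ∃ (g : SL2) (c : ℝ), ∀ z : ℍ, (((g * α * g⁻¹) • z : ℍ) : ℂ) = c * z := by
  obtain ⟨-, -, p, q, hpq, hfix⟩ := hα
  have hp : mobius α p = p := show p ∈ {x | mobius α x = x} from hfix ▸ Or.inl rfl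
  have hq : mobius α q = q := show q ∈ {x | mobius α x = x} from hfix ▸ Or.inr rfl
  obtain ⟨l₁, h₁⟩ := exists_mulVec_homCoord_eq_smul hp
  obtain ⟨l₂, h₂⟩ := exists_mulVec_homCoord_eq_smul hq
  set v := homCoord p
  set δ := v 0 * homCoord q 1 - homCoord q 0 * v 1
  have hδ : δ ≠ 0 := det_homCoord_ne_zero hpq
  set w := δ⁻¹ • homCoord q
  replace h₂ : α.1 *ᵥ w = l₂ • w := by rw [mulVec_smul, h₂, smul_comm]
  let N : SL2 := ⟨!![v 0, w 0; v 1, w 1], by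
    simp only [det_fin_two_of, w, Pi.smul_apply, smul_eq_mul]; field_simp; rfl⟩
  have hN : (α : Matrix (Fin 2) (Fin 2) ℝ) * N = N * !![l₁, 0; 0, l₂] := by
    have e₁ := congrFun h₁
    have e₂ := congrFun h₂
    simp only [mulVec, dotProduct, Fin.sum_univ_two, Pi.smul_apply, smul_eq_mul] at e₁ e₂
    ext i j
    fin_cases i <;> fin_cases j <;> simp [N, Matrix.mul_apply, Fin.sum_univ_two] <;>
      linarith [e₁ 0, e₁ 1, e₂ 0, e₂ 1]
  refine ⟨N⁻¹, l₁ / l₂, fun z => ?_⟩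
  rw [inv_inv]
  exact coe_conj_smul_eq_mul_of_mul_eq_mul_diag hN z

end Eigenvectors

theorem IsHyperbolicIsom.mul_transLength_le_dist_pow_smul {α : SL2} (hα : IsHyperbolicIsom α)
    (m : ℕ) (z : ℍ) : m * transLength α ≤ dist z (α ^ m • z) := by
  obtain ⟨g, c, hc⟩ := hα.exists_conj_smul_eq_mul
  have hτ : transLength α ≤ |Real.log c| :=
    calc transLength α ≤ dist (g⁻¹ • I) (α • g⁻¹ • I) :=
          ciInf_le ⟨0, by rintro _ ⟨w, rfl⟩; exact dist_nonneg⟩ _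
      _ = dist I ((g * α * g⁻¹) • I) := by
          rw [← dist_smul g, smul_inv_smul, mul_smul, mul_smul]
      _ = |Real.log c| := dist_I_eq_abs_log_of_coe_eq_mul (by rw [hc, coe_I])
  calc m * transLength α ≤ m * |Real.log c| := by gcongr
    _ = |Real.log (c ^ m)| := by rw [Real.log_pow, abs_mul, Nat.abs_cast]
    _ ≤ dist (g • z) ((g * α * g⁻¹) ^ m • g • z) :=
          abs_log_le_dist_of_coe_eq_mul (coe_pow_smul_eq_mul hc m _)
    _ = dist z (α ^ m • z) := by
          rw [conj_pow, mul_smul, mul_smul, inv_smul_smul, dist_smul]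

theorem Metric.closure_setOf_infDist_lt_inter_eq_empty {X : Type*} [PseudoMetricSpace X]
    {s t : Set X} {C : ℝ} (hs : s.Nonempty) (ht : t.Nonempty)
    (h : ∀ x ∈ s, ∀ y ∈ t, 2 * C ≤ dist x y) :
    closure {x | infDist x s < C} ∩ {x | infDist x t < C} = ∅ := by
  have hcl : closure {x | infDist x s < C} ⊆ {x | infDist x s ≤ C} :=
    closure_minimal (fun _ hx => (show _ < C from hx).le)
      (isClosed_le (continuous_infDist_pt s) continuous_const)
  refine eq_empty_iff_forall_notMem.2 fun x ⟨hxs, hxt⟩ => ?_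
  obtain ⟨y, hy, hxy⟩ := (infDist_lt_iff ht).1 hxt
  have hys : 2 * C ≤ infDist y s := (le_infDist hs).2 fun z hz => dist_comm z y ▸ h z hz y hy
  have hxs' : infDist x s ≤ C := hcl hxs
  linarith [infDist_le_infDist_add_dist (x := y) (y := x) (s := s), dist_comm x y]

theorem GeodSeg.mul_dist_eq {γ : ℝ → ℍ} {p q s t : ℝ} (h : GeodSeg γ p q) (hs : s ∈ Icc p q)
    (ht : t ∈ Icc p q) : (q - p) * dist (γ s) (γ t) = |s - t| * dist (γ p) (γ q) := by
  obtain ⟨c, u, v, hc, hγ⟩ := h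
  have hpq : p ≤ q := hs.1.trans hs.2
  have hdist : ∀ s ∈ Icc p q, ∀ t ∈ Icc p q, dist (γ s) (γ t) = |v| * |s - t| := by
    intro s hs t ht
    rw [hγ s hs, hγ t ht, hc.dist_eq, Real.dist_eq, ← abs_mul]
    ring_nf
  rw [hdist s hs t ht, hdist p ⟨le_rfl, hpq⟩ q ⟨hpq, le_rfl⟩, abs_sub_comm p q,
    abs_of_nonneg (sub_nonneg.2 hpq)]
  ring

theorem IsQuasiGeodesic.dist_le {K : ℝ} {γ : ℝ → ℍ} (hγ : IsQuasiGeodesic K γ) (hK : 0 ≤ K)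
    {s t u v : ℝ} (hu : u ∈ Icc s t) (hv : v ∈ Icc s t) :
    dist (γ u) (γ v) ≤ K * dist (γ s) (γ t) := by
  have h := (eVariationOn.edist_le γ hu hv).trans (hγ s t (hu.1.trans hu.2))
  rwa [edist_dist, ENNReal.ofReal_le_ofReal_iff (by positivity)] at h

theorem IsQuasiGeodesic.min_dist_le {K : ℝ} {γ : ℝ → ℍ} (hγ : IsQuasiGeodesic K γ) (hK : 0 ≤ K)
    {p q s t : ℝ} (hs : s ∈ Icc p q) (ht : t ≤ p ∨ q ≤ t) :
    min (dist (γ p) (γ s)) (dist (γ s) (γ q)) ≤ K * dist (γ s) (γ t) := by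
  rcases ht with ht | ht
  · have h := hγ.dist_le hK (u := p) (v := s) ⟨ht, hs.1⟩ ⟨ht.trans hs.1, le_rfl⟩
    rw [dist_comm (γ t)] at h
    exact (min_le_left _ _).trans h
  · exact (min_le_right _ _).trans
      (hγ.dist_le hK (u := s) (v := q) ⟨le_rfl, hs.2.trans ht⟩ ⟨hs.2, ht⟩)
theorem GeodSeg.exists_subsegment {γ : ℝ → ℍ} {p q r : ℝ} (hseg : GeodSeg γ p q) (hpq : p ≤ q)
    (hr : 0 ≤ r) (hrD : 2 * r < dist (γ p) (γ q)) :
    ∃ a b : ℝ, p ≤ a ∧ a ≤ b ∧ b ≤ q ∧ dist (γ a) (γ b) = dist (γ p) (γ q) - 2 * r ∧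
      ∀ s ∈ Icc a b, r ≤ min (dist (γ p) (γ s)) (dist (γ s) (γ q)) := by
  set D := dist (γ p) (γ q)
  have hD : 0 < D := by linarith
  have hpq : p < q := hpq.lt_of_ne (by rintro rfl; simp [D] at hD)
  -- `ℓ` is the parameter length of a subsegment of length `r`
  set ℓ := r * (q - p) / D
  have hℓD : ℓ * D = r * (q - p) := div_mul_cancel₀ _ hD.ne'
  have hℓ : 0 ≤ ℓ := by positivity
  have hℓq : 2 * ℓ < q - p := by nlinarith
  have hdist : ∀ s ∈ Icc p q, ∀ t ∈ Icc p q, (q - p) * dist (γ s) (γ t) = |s - t| * D :=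
    fun s hs t ht => hseg.mul_dist_eq hs ht
  have hJ : Icc (p + ℓ) (q - ℓ) ⊆ Icc p q := Icc_subset_Icc (by linarith) (by linarith)
  refine ⟨p + ℓ, q - ℓ, by linarith, by linarith, by linarith, ?_, fun s hs => ?_⟩
  · have e := hdist (p + ℓ) (hJ ⟨le_rfl, by linarith⟩) (q - ℓ) (hJ ⟨by linarith, le_rfl⟩)
    rw [abs_of_nonpos (by linarith)] at e
    refine mul_left_cancel₀ (sub_pos.2 hpq).ne' ?_
    linear_combination e - 2 * hℓD
  · have e₁ := hdist p ⟨le_rfl, hpq.le⟩ s (hJ hs)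
    have e₂ := hdist s (hJ hs) q ⟨hpq.le, le_rfl⟩
    rw [abs_of_nonpos (by linarith [hs.1])] at e₁
    rw [abs_of_nonpos (by linarith [hs.2])] at e₂
    refine le_min (le_of_mul_le_mul_left ?_ (sub_pos.2 hpq))
      (le_of_mul_le_mul_left ?_ (sub_pos.2 hpq)) <;> nlinarith [hs.1, hs.2]

theorem IsQuasiGeodesic.exists_separating_neighbourhood {K C p q : ℝ} {γ : ℝ → ℍ}
    (hγ : IsQuasiGeodesic K γ) (hK : 0 < K) (hC : 0 < C) (hseg : GeodSeg γ p q) (hpq : p ≤ q)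
    (hlen : 6 * K * C < dist (γ p) (γ q)) :
    ∃ U : Set ℍ, IsOpen U ∧
      (∃ a b : ℝ, p ≤ a ∧ a ≤ b ∧ b ≤ q ∧
        dist (γ a) (γ b) = dist (γ p) (γ q) - 6 * K * C ∧ γ '' Icc a b ⊆ U) ∧
      U ⊆ {x : ℍ | infDist x (γ '' Icc p q) < C} ∧
      ∀ s t : ℝ, s ≤ t → (∀ u ∈ Icc s t, u ≤ p ∨ q ≤ u) →
        closure U ∩ {x : ℍ | infDist x (γ '' Icc s t) < C} = ∅ := by
  obtain ⟨a, b, hpa, hab, hbq, hlenJ, hfar⟩ :=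
    hseg.exists_subsegment hpq (r := 3 * K * C) (by positivity) (by linarith)
  have hsep : ∀ s ∈ Icc a b, ∀ t, t ≤ p ∨ q ≤ t → 2 * C ≤ dist (γ s) (γ t) := by
    intro s hs t ht
    have := (hfar s hs).trans
      (hγ.min_dist_le hK.le (Icc_subset_Icc hpa hbq hs) ht)
    nlinarith
  set J := γ '' Icc a b
  have hJne : J.Nonempty := (nonempty_Icc.2 hab).image γ
  refine ⟨{x | infDist x J < C}, isOpen_lt (continuous_infDist_pt J) continuous_const,
    ⟨a, b, hpa, hab, hbq, by linarith, fun x hx => ?_⟩, fun x hx => ?_, fun s t hst hst' => ?_⟩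
  · show infDist x J < C
    rw [infDist_zero_of_mem hx]
    exact hC
  · exact (infDist_le_infDist_of_subset (image_mono (Icc_subset_Icc hpa hbq)) hJne).trans_lt hx
  · refine Metric.closure_setOf_infDist_lt_inter_eq_empty hJne
      ((nonempty_Icc.2 hst).image γ) ?_
    rintro _ ⟨s, hs, rfl⟩ _ ⟨t, ht, rfl⟩
    exact hsep s hs t (hst' t ht)

/-- If `m·τ_α > 6KC` then the `α`-segment `I⁰` of the
quasi-geodesic `γ(αᵐ,β)` ( = `γ '' [0,1/2]`) contains a subsegment `J` of
length at least `m·τ_α − 6KC` together with an open neighbourhood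
`U ⊆ N_C(I⁰)` of `J` whose closure avoids the `C`-neighbourhoods of all the
other geodesic pieces of `γ(αᵐ,β)`. -/
theorem separating_neighbourhood :
    ∀ L > (0 : ℝ), ∀ K ≥ (1 : ℝ), ∀ C > (0 : ℝ), ∀ G : Subgroup SL2,
      ProperlyDiscontinuous G → TorsionFree G →
      ∀ α β : G, IsHyperbolicIsom (α : SL2) → IsHyperbolicIsom (β : SL2) →
        transLength (α : SL2) ≤ L → transLength (β : SL2) ≤ L →
        ∀ m : ℕ, (m : ℝ) * transLength (α : SL2) > 6 * K * C →
          ∀ γ : ℝ → ℍ, IsZigzag ((α : SL2) ^ m) (β : SL2) γ →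
            IsQuasiGeodesic K γ →
            ∃ U : Set ℍ, IsOpen U ∧
              (∃ a b : ℝ, 0 ≤ a ∧ a ≤ b ∧ b ≤ 1 / 2 ∧
                (m : ℝ) * transLength (α : SL2) - 6 * K * C ≤ dist (γ a) (γ b) ∧
                γ '' Icc a b ⊆ U) ∧
              U ⊆ {x : ℍ | infDist x (γ '' Icc 0 (1 / 2)) < C} ∧
              (∀ k : ℤ, k ≠ 0 →
                closure U ∩ {x : ℍ | infDist x (γ '' Icc (k : ℝ) ((k : ℝ) + 1 / 2)) < C} = ∅) ∧
              (∀ k : ℤ,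
                closure U ∩ {x : ℍ | infDist x (γ '' Icc ((k : ℝ) + 1 / 2) ((k : ℝ) + 1)) < C} = ∅) := by
  intro _ _ K hK C hC _ _ _ α _ hα _ _ _ m hm γ hγ hqg
  obtain ⟨-, -, hhalf, -, hseg, -⟩ := hγ
  have hD : (m : ℝ) * transLength (α : SL2) ≤ dist (γ 0) (γ (1 / 2)) := by
    simpa only [hhalf] using hα.mul_transLength_le_dist_pow_smul m (γ 0)
  obtain ⟨U, hU, ⟨a, b, ha, hab, hb, hJ, hJU⟩, hUI, hsep⟩ :=
    hqg.exists_separating_neighbourhood (by linarith) hC hseg (by norm_num) (hm.trans_le hD)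
  refine ⟨U, hU, ⟨a, b, ha, hab, hb, by linarith, hJU⟩, hUI, fun k hk => ?_, fun k => ?_⟩
  · refine hsep _ _ (by linarith) fun u hu => ?_
    rcases Int.cast_le_neg_one_or_one_le_cast_of_ne_zero ℝ hk with hk | hk
    exacts [.inl (by linarith [hu.2]), .inr (by linarith [hu.1])]
  · refine hsep _ _ (by linarith) fun u hu => ?_
    rcases lt_or_ge k 0 with hk | hk
    · exact .inl (by linarith [hu.2, Int.cast_le_neg_one_of_neg (R := ℝ) hk])
    · exact .inr (by linarith [hu.1, Int.cast_nonneg (R := ℝ) hk])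

end
end
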